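/- Let G = (V, E) be a finite simple graph and let w : E → ℂ be complex edge weights. Define the matching partition function Z_G(w) := ∑_{M ⊆ E matching} ∏_{e ∈ M} w_e, where a matching is a set of pairwise vertex-disjoint edges (the empty set is a matching), and set δ := max_{v ∈ V} ∑_{e ∈ E : v ∈ e} |w_e| (with δ := 0 if V is empty). If δ ≤ 1/(4e), then Z_G(w) ≠ 0 and there exists L ∈ ℂ with exp(L) = Z_G(w) and |L − ∑_{e ∈ E} w_e| ≤ (|V|/4)·(2eδ)²/(1 − 2eδ); in particular |L − ∑_{e ∈ E} w_e| ≤ 2e²·|V|·δ². -/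

import Mathlib

open scoped Classical


open scoped Classical

namespace MCE

variable {V : Type} [Fintype V] [DecidableEq V]

noncomputable def mset (G : SimpleGraph V) (S : Finset V) : Finset (Finset (Sym2 V)) :=
  Finset.univ.filter (fun M => (∀ e ∈ M, e ∈ G.edgeSet) ∧
    (∀ e ∈ M, ∀ f ∈ M, e ≠ f → ∀ v : V, ¬(v ∈ e ∧ v ∈ f)) ∧
    (∀ e ∈ M, ∀ x ∈ e, x ∈ S))

noncomputable def Z (G : SimpleGraph V) (w : Sym2 V → ℂ) (S : Finset V) : ℂ :=
  ∑ M ∈ mset G S, ∏ e ∈ M, w e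

lemma mem_mset {G : SimpleGraph V} {S : Finset V} {M : Finset (Sym2 V)} :
    M ∈ mset G S ↔ (∀ e ∈ M, e ∈ G.edgeSet) ∧
      (∀ e ∈ M, ∀ f ∈ M, e ≠ f → ∀ v : V, ¬(v ∈ e ∧ v ∈ f)) ∧
      (∀ e ∈ M, ∀ x ∈ e, x ∈ S) := by
  simp [mset]

lemma Z_empty (G : SimpleGraph V) (w : Sym2 V → ℂ) : Z G w ∅ = 1 := by
  have : mset G (∅ : Finset V) = {∅} := by
    ext M
    simp only [mem_mset, Finset.mem_singleton]
    constructor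
    · rintro ⟨-, -, h⟩
      by_contra hne
      obtain ⟨e, he⟩ := Finset.nonempty_iff_ne_empty.2 hne
      have hx : e.out.1 ∈ e := Sym2.out_fst_mem e
      exact absurd (h e he _ hx) (by simp)
    · rintro rfl; simp
  simp [Z, this]

end MCE

namespace MCE
variable {V : Type} [Fintype V] [DecidableEq V]
variable {G : SimpleGraph V} {w : Sym2 V → ℂ} {S : Finset V} {v u : V}

lemma mset_filter_avoid (G : SimpleGraph V) (S : Finset V) (v : V) :
    (mset G S).filter (fun M => ∀ e ∈ M, v ∉ e) = mset G (S.erase v) := by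
  ext M
  simp only [Finset.mem_filter, mem_mset]
  constructor
  · rintro ⟨⟨h1, h2, h3⟩, h4⟩
    exact ⟨h1, h2, fun e he x hx => Finset.mem_erase.2
      ⟨fun hxv => h4 e he (hxv ▸ hx), h3 e he x hx⟩⟩
  · rintro ⟨h1, h2, h3⟩
    exact ⟨⟨h1, h2, fun e he x hx => Finset.mem_of_mem_erase (h3 e he x hx)⟩,
      fun e he hv => (Finset.notMem_erase v S) (h3 e he v hv)⟩

lemma sum_fiber (w : Sym2 V → ℂ) (hv : v ∈ S) (hu : u ∈ S.erase v) (hadj : G.Adj v u) :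
    ∑ M ∈ (mset G S).filter (fun M => s(v,u) ∈ M), ∏ e ∈ M, w e
      = w s(v,u) * Z G w ((S.erase v).erase u) := by
  have hvu : v ≠ u := hadj.ne
  have huS : u ∈ S := Finset.mem_of_mem_erase hu
  rw [Z, Finset.mul_sum]
  refine Finset.sum_bij' (fun M _ => M.erase s(v,u)) (fun M _ => insert s(v,u) M)
    ?_ ?_ ?_ ?_ ?_
  · rintro M hM
    rw [Finset.mem_filter, mem_mset] at hM
    obtain ⟨⟨h1, h2, h3⟩, h4⟩ := hM
    rw [mem_mset]
    refine ⟨fun e he => h1 e (Finset.mem_of_mem_erase he),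
      fun e he f hf hne => h2 e (Finset.mem_of_mem_erase he) f (Finset.mem_of_mem_erase hf) hne,
      fun e he x hx => ?_⟩
    obtain ⟨hne, heM⟩ := Finset.mem_erase.1 he
    refine Finset.mem_erase.2 ⟨fun hxu => ?_, Finset.mem_erase.2 ⟨fun hxv => ?_, h3 e heM x hx⟩⟩
    · exact h2 e heM _ h4 hne x ⟨hx, hxu ▸ Sym2.mem_mk_right v u⟩
    · exact h2 e heM _ h4 hne x ⟨hx, hxv ▸ Sym2.mem_mk_left v u⟩
  · rintro M hM
    rw [mem_mset] at hM
    obtain ⟨h1, h2, h3⟩ := hM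
    have hnotin : s(v,u) ∉ M := fun h => by
      have := h3 _ h v (Sym2.mem_mk_left v u)
      exact (Finset.notMem_erase v S) (Finset.mem_of_mem_erase this)
    rw [Finset.mem_filter, mem_mset]
    refine ⟨⟨?_, ?_, ?_⟩, Finset.mem_insert_self _ _⟩
    · intro e he
      rcases Finset.mem_insert.1 he with rfl | he'
      · exact G.mem_edgeSet.2 hadj
      · exact h1 e he'
    · intro e he f hf hne x hx
      rcases Finset.mem_insert.1 he with rfl | he' <;>
        rcases Finset.mem_insert.1 hf with rfl | hf'
      · exact absurd rfl hne
      · obtain ⟨hxe, hxf⟩ := hx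
        have hxS := h3 f hf' x hxf
        rcases Sym2.mem_iff.1 hxe with rfl | rfl
        · exact (Finset.notMem_erase x _) (Finset.mem_of_mem_erase hxS)
        · exact (Finset.notMem_erase x _) hxS
      · obtain ⟨hxe, hxf⟩ := hx
        have hxS := h3 e he' x hxe
        rcases Sym2.mem_iff.1 hxf with rfl | rfl
        · exact (Finset.notMem_erase x _) (Finset.mem_of_mem_erase hxS)
        · exact (Finset.notMem_erase x _) hxS
      · exact h2 e he' f hf' hne x hx
    · intro e he x hx
      rcases Finset.mem_insert.1 he with rfl | he'
      · rcases Sym2.mem_iff.1 hx with rfl | rfl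
        · exact hv
        · exact huS
      · exact Finset.mem_of_mem_erase (Finset.mem_of_mem_erase (h3 e he' x hx))
  · intro M hM
    rw [Finset.mem_filter] at hM
    exact Finset.insert_erase hM.2
  · intro M hM
    rw [mem_mset] at hM
    have hnotin : s(v,u) ∉ M := fun h => by
      have := hM.2.2 _ h v (Sym2.mem_mk_left v u)
      exact (Finset.notMem_erase v S) (Finset.mem_of_mem_erase this)
    exact Finset.erase_insert hnotin
  · intro M hM
    rw [Finset.mem_filter] at hM
    exact (Finset.mul_prod_erase M w hM.2).symm

end MCE

namespace MCE
variable {V : Type} [Fintype V] [DecidableEq V]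
variable {G : SimpleGraph V} {S : Finset V} {v u : V}

lemma cover_biUnion (hv : v ∈ S) :
    (mset G S).filter (fun M => ¬ ∀ e ∈ M, v ∉ e)
      = ((S.erase v).filter (fun u => G.Adj v u)).biUnion
          (fun u => (mset G S).filter (fun M => s(v,u) ∈ M)) := by
  ext M
  simp only [Finset.mem_filter, Finset.mem_biUnion, not_forall]
  constructor
  · rintro ⟨hM, e, he, hve⟩
    rw [not_not] at hve
    obtain ⟨h1, h2, h3⟩ := mem_mset.1 hM
    set u₀ := Sym2.Mem.other' hve with hu₀
    have hspec : s(v, u₀) = e := Sym2.other_spec' hve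
    have hadj : G.Adj v u₀ := G.mem_edgeSet.1 (hspec ▸ h1 e he)
    have hu₀S : u₀ ∈ S := h3 e he u₀ (hspec ▸ Sym2.mem_mk_right v u₀)
    exact ⟨u₀, ⟨Finset.mem_erase.2 ⟨hadj.ne', hu₀S⟩, hadj⟩, hM, hspec ▸ he⟩
  · rintro ⟨u, ⟨hu, hadj⟩, hM, heM⟩
    exact ⟨hM, s(v,u), heM, by simp⟩

lemma Z_rec (w : Sym2 V → ℂ) (hv : v ∈ S) :
    Z G w S = Z G w (S.erase v) +
      ∑ u ∈ (S.erase v).filter (fun u => G.Adj v u),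
        w s(v,u) * Z G w ((S.erase v).erase u) := by
  have hsplit := Finset.sum_filter_add_sum_filter_not (mset G S)
    (fun M => ∀ e ∈ M, v ∉ e) (fun M => ∏ e ∈ M, w e)
  rw [Z, ← hsplit, mset_filter_avoid G S v]
  congr 1
  rw [cover_biUnion hv, Finset.sum_biUnion ?disj]
  case disj =>
    intro u1 hu1 u2 hu2 hne
    simp only [Finset.mem_coe, Finset.mem_filter] at hu1 hu2
    refine Finset.disjoint_left.2 fun M hM1 hM2 => ?_
    rw [Finset.mem_filter, mem_mset] at hM1 hM2
    have hne' : s(v,u1) ≠ s(v,u2) := fun h => hne (Sym2.congr_right.1 h)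
    exact hM1.1.2.1 _ hM1.2 _ hM2.2 hne' v ⟨Sym2.mem_mk_left _ _, Sym2.mem_mk_left _ _⟩
  refine Finset.sum_congr rfl fun u hu => ?_
  rw [Finset.mem_filter] at hu
  exact sum_fiber w hv hu.1 hu.2

end MCE

namespace MCE
variable {V : Type} [Fintype V] [DecidableEq V]
variable {G : SimpleGraph V} {S : Finset V} {v u : V}

noncomputable def Wsum (G : SimpleGraph V) (w : Sym2 V → ℂ) (S : Finset V) : ℂ :=
  ∑ e ∈ Finset.univ.filter (fun e : Sym2 V => e ∈ G.edgeSet ∧ ∀ x ∈ e, x ∈ S), w e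

lemma edges_at_eq_image (hv : v ∈ S) :
    Finset.univ.filter (fun e : Sym2 V => e ∈ G.edgeSet ∧ v ∈ e ∧ ∀ x ∈ e, x ∈ S)
      = ((S.erase v).filter (fun u => G.Adj v u)).image (fun u => s(v,u)) := by
  ext e
  simp only [Finset.mem_filter, Finset.mem_univ, true_and, Finset.mem_image, Finset.mem_erase]
  constructor
  · rintro ⟨hE, hve, hsub⟩
    have hspec : s(v, Sym2.Mem.other' hve) = e := Sym2.other_spec' hve
    have hadj : G.Adj v _ := G.mem_edgeSet.1 (hspec ▸ hE)
    exact ⟨_, ⟨⟨hadj.ne', hsub _ (Sym2.other_mem' hve)⟩, hadj⟩, hspec⟩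
  · rintro ⟨u, ⟨⟨hne, huS⟩, hadj⟩, rfl⟩
    refine ⟨G.mem_edgeSet.2 hadj, Sym2.mem_mk_left _ _, fun x hx => ?_⟩
    rcases Sym2.mem_iff.1 hx with rfl | rfl
    · exact hv
    · exact huS

lemma Wsum_rec (w : Sym2 V → ℂ) (hv : v ∈ S) :
    Wsum G w S = Wsum G w (S.erase v) +
      ∑ u ∈ (S.erase v).filter (fun u => G.Adj v u), w s(v,u) := by
  have hsplit := Finset.sum_filter_add_sum_filter_not
    (Finset.univ.filter (fun e : Sym2 V => e ∈ G.edgeSet ∧ ∀ x ∈ e, x ∈ S))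
    (fun e => v ∉ e) w
  rw [Wsum, ← hsplit]
  congr 1
  · rw [Finset.filter_filter]
    apply Finset.sum_congr _ (fun _ _ => rfl)
    ext e
    simp only [Finset.mem_filter, Finset.mem_univ, true_and]
    constructor
    · rintro ⟨⟨hE, hsub⟩, hve⟩
      exact ⟨hE, fun x hx => Finset.mem_erase.2 ⟨fun h => hve (h ▸ hx), hsub x hx⟩⟩
    · rintro ⟨hE, hsub⟩
      exact ⟨⟨hE, fun x hx => Finset.mem_of_mem_erase (hsub x hx)⟩,
        fun hve => Finset.notMem_erase v S (hsub v hve)⟩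
  · rw [Finset.filter_filter]
    have : Finset.univ.filter (fun e : Sym2 V => (e ∈ G.edgeSet ∧ ∀ x ∈ e, x ∈ S) ∧ ¬ v ∉ e)
        = Finset.univ.filter (fun e : Sym2 V => e ∈ G.edgeSet ∧ v ∈ e ∧ ∀ x ∈ e, x ∈ S) := by
      ext e; simp only [Finset.mem_filter, not_not]; tauto
    rw [this, edges_at_eq_image hv, Finset.sum_image]
    intro u1 _ u2 _ h
    exact Sym2.congr_right.1 h

lemma sum_abs_nbhd_le (w : Sym2 V → ℂ) {δ : ℝ}
    (hδ : (∑ e ∈ Finset.univ.filter (fun e : Sym2 V => e ∈ G.edgeSet ∧ v ∈ e),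
        ‖w e‖) ≤ δ) :
    ∑ u ∈ (S.erase v).filter (fun u => G.Adj v u), ‖w s(v,u)‖ ≤ δ := by
  have hinj : ∀ u1 ∈ (S.erase v).filter (fun u => G.Adj v u),
      ∀ u2 ∈ (S.erase v).filter (fun u => G.Adj v u),
      s(v,u1) = s(v,u2) → u1 = u2 := fun u1 _ u2 _ h => Sym2.congr_right.1 h
  have himg : ∑ e ∈ ((S.erase v).filter (fun u => G.Adj v u)).image (fun u => s(v,u)),
      ‖w e‖ = ∑ u ∈ (S.erase v).filter (fun u => G.Adj v u),
        ‖w s(v,u)‖ := Finset.sum_image hinj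
  rw [← himg]
  refine le_trans (Finset.sum_le_sum_of_subset_of_nonneg ?_ (fun _ _ _ => by positivity)) hδ
  intro e he
  simp only [Finset.mem_image, Finset.mem_filter, Finset.mem_univ, true_and] at he ⊢
  obtain ⟨u, ⟨_, hadj⟩, rfl⟩ := he
  exact ⟨G.mem_edgeSet.2 hadj, Sym2.mem_mk_left _ _⟩

end MCE

namespace MCE
variable {V : Type} [Fintype V] [DecidableEq V]
variable {G : SimpleGraph V} {S : Finset V} {v u : V} {δ : ℝ}

lemma key (w : Sym2 V → ℂ)
    (hδ : ∀ v : V,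
      (∑ e ∈ Finset.univ.filter (fun e : Sym2 V => e ∈ G.edgeSet ∧ v ∈ e),
        ‖w e‖) ≤ δ)
    (hδ0 : 0 ≤ δ) (hδq : δ ≤ 1/4) (S : Finset V) :
    Z G w S ≠ 0 ∧ ∀ v ∈ S,
      ‖Z G w S / Z G w (S.erase v) - 1‖ ≤ 2*δ ∧
      ‖Z G w S / Z G w (S.erase v) - 1
        - ∑ u ∈ (S.erase v).filter (fun u => G.Adj v u), w s(v,u)‖ ≤ 2*δ^2/(1-2*δ) := by
  induction S using Finset.strongInduction with
  | _ S IH =>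
  have hpos : (0:ℝ) < 1 - 2*δ := by linarith
  have main : ∀ v ∈ S,
      ‖Z G w S / Z G w (S.erase v) - 1‖ ≤ 2*δ ∧
      ‖Z G w S / Z G w (S.erase v) - 1
        - ∑ u ∈ (S.erase v).filter (fun u => G.Adj v u), w s(v,u)‖ ≤ 2*δ^2/(1-2*δ) := by
    intro v hv
    have hsub : S.erase v ⊂ S := Finset.erase_ssubset hv
    obtain ⟨hZv, hIH⟩ := IH _ hsub
    have hterm : ∀ u' ∈ (S.erase v).filter (fun u => G.Adj v u),
        ‖Z G w ((S.erase v).erase u') / Z G w (S.erase v)‖ ≤ 1/(1-2*δ) ∧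
        ‖Z G w ((S.erase v).erase u') / Z G w (S.erase v) - 1‖
          ≤ 2*δ/(1-2*δ) := by
      intro u' hu'
      rw [Finset.mem_filter] at hu'
      obtain ⟨hr, -⟩ := hIH u' hu'.1
      set r := Z G w (S.erase v) / Z G w ((S.erase v).erase u') with hrdef
      have h1 : 1 - 2*δ ≤ ‖r‖ := by
        have htri : ‖(1:ℂ)‖ ≤ ‖1 - r‖ + ‖r‖ := by
          have := norm_add_le (1 - r) r
          simpa using this
        rw [show (1 - r) = -(r-1) by ring, norm_neg] at htri
        simp only [norm_one] at htri
        linarith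
      have hrne : r ≠ 0 := by
        intro h
        rw [h, norm_zero] at h1
        linarith
      have hZvu : Z G w ((S.erase v).erase u') ≠ 0 := by
        intro h
        rw [hrdef, h, div_zero] at hrne
        exact hrne rfl
      have hinv : Z G w ((S.erase v).erase u') / Z G w (S.erase v) = r⁻¹ := by
        rw [hrdef, inv_div]
      have habs : ‖r⁻¹‖ ≤ 1/(1-2*δ) := by
        rw [norm_inv]
        rw [one_div]
        exact inv_anti₀ hpos h1
      constructor
      · rw [hinv]; exact habs
      · rw [hinv]
        have : r⁻¹ - 1 = (1 - r) * r⁻¹ := by field_simp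
        rw [this, norm_mul, show (1 - r) = -(r-1) by ring, norm_neg]
        calc ‖r - 1‖ * ‖r⁻¹‖
            ≤ (2*δ) * (1/(1-2*δ)) := by
              apply mul_le_mul hr habs (by positivity) (by linarith)
          _ = 2*δ/(1-2*δ) := by ring
    have hid : Z G w S / Z G w (S.erase v) - 1
        = ∑ u' ∈ (S.erase v).filter (fun u => G.Adj v u),
            w s(v,u') * (Z G w ((S.erase v).erase u') / Z G w (S.erase v)) := by
      rw [Z_rec w hv, add_div, div_self hZv, add_sub_cancel_left, Finset.sum_div]
      exact Finset.sum_congr rfl fun u' _ => mul_div_assoc _ _ _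
    have hsumabs : ∑ u' ∈ (S.erase v).filter (fun u => G.Adj v u),
        ‖w s(v,u')‖ ≤ δ := sum_abs_nbhd_le w (hδ v)
    constructor
    · rw [hid]
      calc ‖∑ u' ∈ (S.erase v).filter (fun u => G.Adj v u),
              w s(v,u') * (Z G w ((S.erase v).erase u') / Z G w (S.erase v))‖
          ≤ ∑ u' ∈ (S.erase v).filter (fun u => G.Adj v u),
              ‖w s(v,u') * (Z G w ((S.erase v).erase u') / Z G w (S.erase v))‖ :=
            norm_sum_le _ _
        _ ≤ ∑ u' ∈ (S.erase v).filter (fun u => G.Adj v u),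
              ‖w s(v,u')‖ * (1/(1-2*δ)) := by
            refine Finset.sum_le_sum fun u' hu' => ?_
            rw [norm_mul]
            exact mul_le_mul_of_nonneg_left (hterm u' hu').1 (by positivity)
        _ = (∑ u' ∈ (S.erase v).filter (fun u => G.Adj v u),
              ‖w s(v,u')‖) * (1/(1-2*δ)) := by
            rw [Finset.sum_mul]
        _ ≤ δ * (1/(1-2*δ)) := by
            exact mul_le_mul_of_nonneg_right hsumabs (by positivity)
        _ ≤ 2*δ := by
            rw [mul_one_div, div_le_iff₀ hpos]
            nlinarith
    · rw [hid, ← Finset.sum_sub_distrib]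
      calc ‖∑ u' ∈ (S.erase v).filter (fun u => G.Adj v u),
              (w s(v,u') * (Z G w ((S.erase v).erase u') / Z G w (S.erase v)) - w s(v,u'))‖
          ≤ ∑ u' ∈ (S.erase v).filter (fun u => G.Adj v u),
              ‖w s(v,u') * (Z G w ((S.erase v).erase u') / Z G w (S.erase v))
                - w s(v,u')‖ := norm_sum_le _ _
        _ ≤ ∑ u' ∈ (S.erase v).filter (fun u => G.Adj v u),
              ‖w s(v,u')‖ * (2*δ/(1-2*δ)) := by
            refine Finset.sum_le_sum fun u' hu' => ?_
            have : w s(v,u') * (Z G w ((S.erase v).erase u') / Z G w (S.erase v)) - w s(v,u')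
                = w s(v,u') * (Z G w ((S.erase v).erase u') / Z G w (S.erase v) - 1) := by ring
            rw [this, norm_mul]
            exact mul_le_mul_of_nonneg_left (hterm u' hu').2 (by positivity)
        _ = (∑ u' ∈ (S.erase v).filter (fun u => G.Adj v u),
              ‖w s(v,u')‖) * (2*δ/(1-2*δ)) := by rw [Finset.sum_mul]
        _ ≤ δ * (2*δ/(1-2*δ)) :=
            mul_le_mul_of_nonneg_right hsumabs (by positivity)
        _ = 2*δ^2/(1-2*δ) := by ring
  refine ⟨?_, main⟩
  rcases S.eq_empty_or_nonempty with rfl | ⟨v, hv⟩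
  · rw [Z_empty]; exact one_ne_zero
  · obtain ⟨hb1, -⟩ := main v hv
    intro h0
    rw [h0, zero_div, zero_sub, norm_neg, norm_one] at hb1
    linarith

end MCE

namespace MCE
variable {V : Type} [Fintype V] [DecidableEq V]
variable {G : SimpleGraph V} {S : Finset V} {v u : V} {δ : ℝ}

lemma Wsum_empty (G : SimpleGraph V) (w : Sym2 V → ℂ) : Wsum G w ∅ = 0 := by
  rw [Wsum]
  apply Finset.sum_eq_zero
  intro e he
  simp only [Finset.mem_filter] at he
  exact absurd (he.2.2 e.out.1 (Sym2.out_fst_mem e)) (Finset.notMem_empty _)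

lemma exists_log (w : Sym2 V → ℂ)
    (hδ : ∀ v : V,
      (∑ e ∈ Finset.univ.filter (fun e : Sym2 V => e ∈ G.edgeSet ∧ v ∈ e),
        ‖w e‖) ≤ δ)
    (hδ0 : 0 ≤ δ) (hδq : δ ≤ 1/4) (S : Finset V) :
    ∃ L : ℂ, Complex.exp L = Z G w S ∧
      ‖L - Wsum G w S‖ ≤ S.card * (4*δ^2/(1-2*δ)) := by
  induction S using Finset.strongInduction with
  | _ S IH =>
  have hpos : (0:ℝ) < 1 - 2*δ := by linarith
  rcases S.eq_empty_or_nonempty with rfl | ⟨v, hv⟩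
  · exact ⟨0, by rw [Complex.exp_zero, Z_empty], by simp [Wsum_empty]⟩
  · obtain ⟨L', hexp', hbd'⟩ := IH _ (Finset.erase_ssubset hv)
    have hZS : Z G w S ≠ 0 := (key w hδ hδ0 hδq S).1
    have hZv : Z G w (S.erase v) ≠ 0 := (key w hδ hδ0 hδq (S.erase v)).1
    obtain ⟨hr1, hr2⟩ := (key w hδ hδ0 hδq S).2 v hv
    set r := Z G w S / Z G w (S.erase v) with hrdef
    have hr0 : r ≠ 0 := div_ne_zero hZS hZv
    refine ⟨L' + Complex.log r, ?_, ?_⟩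
    · rw [Complex.exp_add, Complex.exp_log hr0, hexp', hrdef, mul_comm,
        div_mul_cancel₀ _ hZv]
    · have hlog : ‖Complex.log r - (r - 1)‖ ≤ 2*δ^2/(1-2*δ) := by
        have h2δ : ‖r - 1‖ < 1 := lt_of_le_of_lt hr1 (by linarith)
        have := Complex.norm_log_one_add_sub_self_le (z := r - 1) (by
          exact h2δ)
        rw [show (1 : ℂ) + (r - 1) = r by ring] at this
        refine le_trans this ?_
        have habs0 : (0:ℝ) ≤ ‖r-1‖ := norm_nonneg _
        calc ‖r-1‖^2 * (1 - ‖r-1‖)⁻¹ / 2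
            ≤ (2*δ)^2 * (1-2*δ)⁻¹ / 2 := by
              have h1 : ‖r-1‖^2 ≤ (2*δ)^2 := by nlinarith
              have h2 : (1 - ‖r-1‖)⁻¹ ≤ (1-2*δ)⁻¹ :=
                inv_anti₀ hpos (by linarith)
              have h3 : (0:ℝ) ≤ (1 - ‖r-1‖)⁻¹ :=
                inv_nonneg.2 (by linarith)
              have h4 := mul_le_mul h1 h2 h3 (by positivity)
              linarith
          _ = 2*δ^2/(1-2*δ) := by ring
      have hlog2 : ‖Complex.log r
          - ∑ u' ∈ (S.erase v).filter (fun u => G.Adj v u), w s(v,u')‖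
            ≤ 4*δ^2/(1-2*δ) := by
        have : Complex.log r - ∑ u' ∈ (S.erase v).filter (fun u => G.Adj v u), w s(v,u')
            = (Complex.log r - (r - 1))
              + (r - 1 - ∑ u' ∈ (S.erase v).filter (fun u => G.Adj v u), w s(v,u')) := by
          ring
        rw [this]
        calc ‖_‖ ≤ _ := norm_add_le _ _
          _ ≤ 2*δ^2/(1-2*δ) + 2*δ^2/(1-2*δ) := add_le_add hlog hr2
          _ = 4*δ^2/(1-2*δ) := by ring
      have hdecomp : L' + Complex.log r - Wsum G w S
          = (L' - Wsum G w (S.erase v))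
            + (Complex.log r
              - ∑ u' ∈ (S.erase v).filter (fun u => G.Adj v u), w s(v,u')) := by
        rw [Wsum_rec w hv]; ring
      rw [hdecomp]
      have hcard : (S.erase v).card = S.card - 1 := Finset.card_erase_of_mem hv
      have hcard1 : 1 ≤ S.card := Finset.card_pos.2 ⟨v, hv⟩
      calc ‖_‖ ≤ _ := norm_add_le _ _
        _ ≤ (S.erase v).card * (4*δ^2/(1-2*δ)) + 4*δ^2/(1-2*δ) := add_le_add hbd' hlog2
        _ ≤ S.card * (4*δ^2/(1-2*δ)) := by
          rw [hcard, Nat.cast_sub hcard1]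
          have hB : (0:ℝ) ≤ 4*δ^2/(1-2*δ) := by positivity
          push_cast
          nlinarith

end MCE

/-- Let `G` be a finite simple graph with complex edge weights `w`. With
`Z_G(w) := ∑_{M matching} ∏_{e ∈ M} w_e` and `δ` an upper bound (in particular the maximum)
of `∑_{e ∋ v} |w_e|` over vertices `v`, if `δ ≤ 1/(4e)` then `Z_G(w) ≠ 0` and there is a
logarithm `L` of `Z_G(w)` with `|L − ∑_e w_e| ≤ (|V|/4)·(2eδ)²/(1−2eδ)`, and in particular
`|L − ∑_e w_e| ≤ 2e²·|V|·δ²`. -/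
theorem matching_cluster_expansion {V : Type} [Fintype V] [DecidableEq V]
    (G : SimpleGraph V) (w : Sym2 V → ℂ) (δ : ℝ)
    (hδ : ∀ v : V,
      (∑ e ∈ Finset.univ.filter (fun e : Sym2 V => e ∈ G.edgeSet ∧ v ∈ e),
        ‖w e‖) ≤ δ)
    (hδ0 : 0 ≤ δ)
    (hsmall : δ ≤ 1 / (4 * Real.exp 1)) :
    (∑ M ∈ Finset.univ.filter
        (fun M : Finset (Sym2 V) =>
          (∀ e ∈ M, e ∈ G.edgeSet) ∧
          ∀ e ∈ M, ∀ f ∈ M, e ≠ f → ∀ v : V, ¬(v ∈ e ∧ v ∈ f)),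
      ∏ e ∈ M, w e) ≠ 0 ∧
    ∃ L : ℂ,
      Complex.exp L =
        (∑ M ∈ Finset.univ.filter
            (fun M : Finset (Sym2 V) =>
              (∀ e ∈ M, e ∈ G.edgeSet) ∧
              ∀ e ∈ M, ∀ f ∈ M, e ≠ f → ∀ v : V, ¬(v ∈ e ∧ v ∈ f)),
          ∏ e ∈ M, w e) ∧
      ‖
          L - ∑ e ∈ Finset.univ.filter (fun e : Sym2 V => e ∈ G.edgeSet), w e‖ ≤
        ((Fintype.card V : ℝ) / 4) * (2 * Real.exp 1 * δ) ^ 2 / (1 - 2 * Real.exp 1 * δ) ∧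
      ‖
          L - ∑ e ∈ Finset.univ.filter (fun e : Sym2 V => e ∈ G.edgeSet), w e‖ ≤
        2 * Real.exp 1 ^ 2 * (Fintype.card V : ℝ) * δ ^ 2 := by
  have hE : (2.7182818283 : ℝ) < Real.exp 1 := Real.exp_one_gt_d9
  have hE2 : Real.exp 1 < 2.7182818286 := Real.exp_one_lt_d9
  set E := Real.exp 1 with hEdef
  have hE1 : (1:ℝ) ≤ E := by norm_num at hE ⊢; linarith
  have hδq : δ ≤ 1/4 := by
    refine le_trans hsmall ?_
    apply one_div_le_one_div_of_le (by norm_num)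
    linarith
  have hpos1 : (0:ℝ) < 1 - 2*δ := by linarith
  have hEδ : 2*E*δ ≤ 1/2 := by
    have h4E : (0:ℝ) < 4*E := by linarith
    have := (le_div_iff₀ h4E).1 hsmall
    nlinarith
  have hpos2 : (0:ℝ) < 1 - 2*E*δ := by linarith
  have hZdef : (∑ M ∈ Finset.univ.filter
        (fun M : Finset (Sym2 V) =>
          (∀ e ∈ M, e ∈ G.edgeSet) ∧
          ∀ e ∈ M, ∀ f ∈ M, e ≠ f → ∀ v : V, ¬(v ∈ e ∧ v ∈ f)),
      ∏ e ∈ M, w e) = MCE.Z G w Finset.univ := by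
    rw [MCE.Z]
    apply Finset.sum_congr _ (fun _ _ => rfl)
    ext M
    simp [MCE.mem_mset]
  have hWdef : (∑ e ∈ Finset.univ.filter (fun e : Sym2 V => e ∈ G.edgeSet), w e)
      = MCE.Wsum G w Finset.univ := by
    rw [MCE.Wsum]
    apply Finset.sum_congr _ (fun _ _ => rfl)
    ext e
    simp
  obtain ⟨L, hexp, hbd⟩ := MCE.exists_log w hδ hδ0 hδq Finset.univ
  rw [Finset.card_univ] at hbd
  set n := (Fintype.card V : ℝ) with hn
  have hn0 : 0 ≤ n := Nat.cast_nonneg _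
  have hstep : 4*δ^2/(1-2*δ) ≤ (2*E*δ)^2/(4*(1-2*E*δ)) := by
    rw [div_le_div_iff₀ hpos1 (by positivity)]
    have hEpos : (0:ℝ) ≤ E := by linarith
    have hE7 : 7 ≤ E^2 := by nlinarith
    have hE3 : E ≤ 3 := by norm_num at hE2 ⊢; linarith
    have ha : 0 ≤ (E^2 - 7) * δ^2 := by nlinarith [sq_nonneg δ]
    have hb : 0 ≤ E * (3 - E) * (δ^2*δ) := mul_nonneg (mul_nonneg hEpos (by linarith)) (by positivity)
    have hc : 0 ≤ E * (δ^2*δ) := by positivity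
    nlinarith [ha, hb, hc]
  have hA1 : n * (4*δ^2/(1-2*δ)) ≤ n/4 * (2*E*δ)^2/(1-2*E*δ) := by
    have := mul_le_mul_of_nonneg_left hstep hn0
    calc n * (4*δ^2/(1-2*δ)) ≤ n * ((2*E*δ)^2/(4*(1-2*E*δ))) := this
      _ = n/4 * (2*E*δ)^2/(1-2*E*δ) := by
        field_simp
  have hB12 : n/4 * (2*E*δ)^2/(1-2*E*δ) ≤ 2*E^2*n*δ^2 := by
    rw [div_le_iff₀ hpos2]
    have hX : 0 ≤ n*E^2*δ^2 := by positivity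
    have hY : (0:ℝ) ≤ 1/2 - 2*E*δ := by linarith
    nlinarith [mul_nonneg hX hY]
  have habs1 : ‖L - ∑ e ∈ Finset.univ.filter
      (fun e : Sym2 V => e ∈ G.edgeSet), w e‖ ≤ n/4 * (2*E*δ)^2/(1-2*E*δ) := by
    rw [hWdef]
    exact le_trans hbd hA1
  refine ⟨hZdef ▸ (MCE.key w hδ hδ0 hδq Finset.univ).1, L, ?_, habs1,
    le_trans habs1 hB12⟩
  rw [hZdef]
  exact hexp
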